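/- arXiv:1108.2542 — 3 statements merged into one kernel-verified Lean document; each statement's English description precedes it below -/
import Mathlib

section
/- Let G be a finite simple graph, T a spanning tree of G, and G̃ the lift of G with respect to T. Then girth(G̃) ≥ girth(G). -/
open SimpleGraph

noncomputable section
attribute [local instance] Classical.propDecidable

variable {V : Type*}

/-- The set `S` of edges of `G` not in the spanning tree `T`. -/
def nonTreeEdges (G T : SimpleGraph V) : Set (Sym2 V) := G.edgeSet \ T.edgeSet

/-- The lift `G̃` of `G` with respect to the spanning tree `T`: its vertices are the pairs
`(u, f)` with `u ∈ V(G)` and `f : S → ZMod 2`; `(u,f)` is adjacent to `(v,g)` iff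
`uv ∈ E(G)` and `g` agrees with `f` except that `g(uv) = f(uv) + 1` when `uv ∈ S`
(so `g = f` when `uv ∈ E(T)`). -/
def liftGraph (G T : SimpleGraph V) :
    SimpleGraph (V × (nonTreeEdges G T → ZMod 2)) where
  Adj p q := G.Adj p.1 q.1 ∧
    q.2 = fun e => p.2 e + (if (e : Sym2 V) = s(p.1, q.1) then 1 else 0)
  symm := by
    constructor
    rintro p q ⟨hadj, hf⟩
    refine ⟨hadj.symm, ?_⟩
    have key : ∀ a c : ZMod 2, a + c + c = a := by decide
    funext e
    have hs : s(q.1, p.1) = s(p.1, q.1) := Sym2.eq_swap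
    rw [hs, hf]
    exact (key _ _).symm
  loopless := ⟨fun p h => G.irrefl h.1⟩

/-- The projection `π : G̃ → G` on vertices, as a graph homomorphism. -/
def liftProj (G T : SimpleGraph V) : liftGraph G T →g G :=
  ⟨Prod.fst, fun h => h.1⟩

/-- The projection `π` on edges of the lift. -/
def edgeProj (G T : SimpleGraph V) :
    Sym2 (V × (nonTreeEdges G T → ZMod 2)) → Sym2 V :=
  Sym2.map Prod.fst

/-- A path from `v` to `u` containing the edge `s(u, v)` must be a single edge. -/
private lemma path_length_one_of_edge_mem {W : Type*} {G : SimpleGraph W} :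
    ∀ {v u : W} (q : G.Walk v u), q.IsPath → s(u, v) ∈ q.edges → q.length = 1 := by
  intro v u q
  induction q with
  | nil => intro _ hmem; simp at hmem
  | @cons v z u h r ihr =>
    intro hp hmem
    rw [SimpleGraph.Walk.edges_cons, List.mem_cons] at hmem
    rcases hmem with heq | hmem
    · rw [Sym2.eq_iff] at heq
      rcases heq with ⟨h1, h2⟩ | ⟨h1, _⟩
      · exact absurd h2 h.ne
      · subst h1
        have hr : r = SimpleGraph.Walk.nil := (SimpleGraph.Walk.isPath_iff_eq_nil (p := r)).1 hp.of_cons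
        simp [hr]
    · exfalso
      have hv : v ∈ r.support := SimpleGraph.Walk.snd_mem_support_of_mem_edges r hmem
      exact ((SimpleGraph.Walk.cons_isPath_iff h r).1 hp).2 hv

/-- Key lemma: any lift path between two distinct vertices lying over the same base vertex
yields a cycle in `G` of at most the same length. -/
private lemma lift_key (G T : SimpleGraph V) :
    ∀ n : ℕ, ∀ (x y : V × (nonTreeEdges G T → ZMod 2)) (w : (liftGraph G T).Walk x y),
      w.length = n → x.1 = y.1 → x ≠ y → w.IsPath →
      ∃ (v : V) (c : G.Walk v v), c.IsCycle ∧ c.length ≤ n := by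
  intro n
  induction n using Nat.strong_induction_on with
  | _ n ih =>
    intro x y w hlen hbase hne hpath
    cases w with
    | nil => exact absurd rfl hne
    | @cons _ z _ h w' =>
      have hw' : w'.IsPath := hpath.of_cons
      have hGadj : G.Adj x.1 z.1 := h.1
      have hlen' : w'.length + 1 = n := by simpa using hlen
      have hql : (w'.map (liftProj G T)).length = w'.length := by
        simp [SimpleGraph.Walk.length_map]
      by_cases hnod : (w'.map (liftProj G T)).support.Nodup
      · have hqp : (w'.map (liftProj G T)).IsPath :=
          (SimpleGraph.Walk.isPath_def _).2 hnod
        have hadj' : G.Adj y.1 z.1 := hbase ▸ hGadj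
        by_cases hedge : s(y.1, z.1) ∈ (w'.map (liftProj G T)).edges
        · -- degenerate: then w' has length 1 and x = y, a contradiction
          exfalso
          apply hne
          have h1 : (w'.map (liftProj G T)).length = 1 :=
            path_length_one_of_edge_mem _ hqp hedge
          have hw1 : w'.length = 1 := by rw [← hql]; exact h1
          cases w' with
          | nil => simp at hw1
          | @cons _ z2 _ h2 w'' =>
            cases w'' with
            | nil =>
              have hfz := h.2
              have hfy := h2.2
              have key : ∀ a c : ZMod 2, a + c + c = a := by decide
              apply Prod.ext hbase
              funext e
              rw [hfy, hfz]
              have hs : s(z.1, y.1) = s(x.1, z.1) := by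
                rw [← hbase]; exact Sym2.eq_swap
              simp only [hs]
              exact (key _ _).symm
            | cons h3 w3 => simp at hw1
        · -- we get a genuine cycle of length n in G
          refine ⟨y.1, SimpleGraph.Walk.cons hadj' (w'.map (liftProj G T)), ?_, ?_⟩
          · exact (SimpleGraph.Walk.cons_isCycle_iff _ hadj').2 ⟨hqp, hedge⟩
          · change (w'.map (liftProj G T)).length + 1 ≤ _
            rw [hql]
            omega
      · -- two distinct lift vertices over the same base vertex inside w'
        have hnodl : w'.support.Nodup := hw'.support_nodup
        have hnodm : ¬ (w'.support.map (liftProj G T)).Nodup := by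
          rwa [SimpleGraph.Walk.support_map] at hnod
        have hexists : ∃ b1 ∈ w'.support, ∃ b2 ∈ w'.support,
            (liftProj G T) b1 = (liftProj G T) b2 ∧ b1 ≠ b2 := by
          by_contra hcon
          push_neg at hcon
          exact hnodm (hnodl.map_on (fun a ha b hb hab => by
            by_contra hne2
            exact hne2 (hcon a ha b hb hab)))
        obtain ⟨b1, hb1, b2, hb2, hfb, hne12⟩ := hexists
        have hfb' : b1.1 = b2.1 := hfb
        by_cases hb2d : b2 ∈ (w'.dropUntil b1 hb1).support
        · have hsegp : ((w'.dropUntil b1 hb1).takeUntil b2 hb2d).IsPath :=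
            (hw'.dropUntil hb1).takeUntil hb2d
          have hseglen : ((w'.dropUntil b1 hb1).takeUntil b2 hb2d).length < n := by
            have h1 := SimpleGraph.Walk.length_takeUntil_le (w'.dropUntil b1 hb1) hb2d
            have h2 := SimpleGraph.Walk.length_dropUntil_le w' hb1
            omega
          obtain ⟨v, c, hc, hcl⟩ := ih _ hseglen b1 b2 _ rfl hfb' hne12 hsegp
          exact ⟨v, c, hc, hcl.trans hseglen.le⟩
        · have hb2t : b2 ∈ (w'.takeUntil b1 hb1).support := by
            have hmem := hb2
            rw [← SimpleGraph.Walk.take_spec w' hb1,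
              SimpleGraph.Walk.mem_support_append_iff] at hmem
            tauto
          have hsegp : ((w'.takeUntil b1 hb1).dropUntil b2 hb2t).IsPath :=
            (hw'.takeUntil hb1).dropUntil hb2t
          have hseglen : ((w'.takeUntil b1 hb1).dropUntil b2 hb2t).length < n := by
            have h1 := SimpleGraph.Walk.length_dropUntil_le (w'.takeUntil b1 hb1) hb2t
            have h2 := SimpleGraph.Walk.length_takeUntil_le w' hb1
            omega
          obtain ⟨v, c, hc, hcl⟩ := ih _ hseglen b2 b1 _ rfl hfb'.symm hne12.symm hsegp
          exact ⟨v, c, hc, hcl.trans hseglen.le⟩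

/-- Any cycle in the lift yields a cycle in `G` of at most the same length. -/
private lemma lift_cycle (G T : SimpleGraph V) (a : V × (nonTreeEdges G T → ZMod 2))
    (w : (liftGraph G T).Walk a a) (hw : w.IsCycle) :
    ∃ (v : V) (c : G.Walk v v), c.IsCycle ∧ c.length ≤ w.length := by
  cases w with
  | nil => simpa using hw.three_le_length
  | @cons _ z _ h w' =>
    have hw' : w'.IsPath := ((SimpleGraph.Walk.cons_isCycle_iff w' h).1 hw).1
    have hGadj : G.Adj a.1 z.1 := h.1
    have hql : (w'.map (liftProj G T)).length = w'.length := by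
      simp [SimpleGraph.Walk.length_map]
    by_cases hnod : (w'.map (liftProj G T)).support.Nodup
    · have hqp : (w'.map (liftProj G T)).IsPath :=
        (SimpleGraph.Walk.isPath_def _).2 hnod
      by_cases hedge : s(a.1, z.1) ∈ (w'.map (liftProj G T)).edges
      · exfalso
        have h1 : (w'.map (liftProj G T)).length = 1 :=
          path_length_one_of_edge_mem _ hqp hedge
        have h3 := hw.three_le_length
        simp only [SimpleGraph.Walk.length_cons] at h3
        omega
      · refine ⟨a.1, SimpleGraph.Walk.cons hGadj (w'.map (liftProj G T)), ?_, ?_⟩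
        · exact (SimpleGraph.Walk.cons_isCycle_iff _ hGadj).2 ⟨hqp, hedge⟩
        · change (w'.map (liftProj G T)).length + 1 ≤ _
          simp [hql]
    · have hnodl : w'.support.Nodup := hw'.support_nodup
      have hnodm : ¬ (w'.support.map (liftProj G T)).Nodup := by
        rwa [SimpleGraph.Walk.support_map] at hnod
      have hexists : ∃ b1 ∈ w'.support, ∃ b2 ∈ w'.support,
          (liftProj G T) b1 = (liftProj G T) b2 ∧ b1 ≠ b2 := by
        by_contra hcon
        push_neg at hcon
        exact hnodm (hnodl.map_on (fun p hp q hq hpq => by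
          by_contra hne2
          exact hne2 (hcon p hp q hq hpq)))
      obtain ⟨b1, hb1, b2, hb2, hfb, hne12⟩ := hexists
      have hfb' : b1.1 = b2.1 := hfb
      by_cases hb2d : b2 ∈ (w'.dropUntil b1 hb1).support
      · have hsegp : ((w'.dropUntil b1 hb1).takeUntil b2 hb2d).IsPath :=
          (hw'.dropUntil hb1).takeUntil hb2d
        have hseglen : ((w'.dropUntil b1 hb1).takeUntil b2 hb2d).length ≤ w'.length := by
          have h1 := SimpleGraph.Walk.length_takeUntil_le (w'.dropUntil b1 hb1) hb2d
          have h2 := SimpleGraph.Walk.length_dropUntil_le w' hb1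
          omega
        obtain ⟨v, c, hc, hcl⟩ := lift_key G T _ b1 b2 _ rfl hfb' hne12 hsegp
        exact ⟨v, c, hc, by simp only [SimpleGraph.Walk.length_cons]; omega⟩
      · have hb2t : b2 ∈ (w'.takeUntil b1 hb1).support := by
          have hmem := hb2
          rw [← SimpleGraph.Walk.take_spec w' hb1,
            SimpleGraph.Walk.mem_support_append_iff] at hmem
          tauto
        have hsegp : ((w'.takeUntil b1 hb1).dropUntil b2 hb2t).IsPath :=
          (hw'.takeUntil hb1).dropUntil hb2t
        have hseglen : ((w'.takeUntil b1 hb1).dropUntil b2 hb2t).length ≤ w'.length := by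
          have h1 := SimpleGraph.Walk.length_dropUntil_le (w'.takeUntil b1 hb1) hb2t
          have h2 := SimpleGraph.Walk.length_takeUntil_le w' hb1
          omega
        obtain ⟨v, c, hc, hcl⟩ := lift_key G T _ b2 b1 _ rfl hfb'.symm hne12.symm hsegp
        exact ⟨v, c, hc, by simp only [SimpleGraph.Walk.length_cons]; omega⟩

/-- Let `G` be a finite simple graph, `T` a spanning tree of `G`, and `G̃` the lift of `G`
with respect to `T`. Then `girth(G̃) ≥ girth(G)` (girths measured in `ℕ∞`, the girth of an
acyclic graph being `∞`). -/
theorem liftGraph_girth_ge {V : Type*} [Fintype V] (G T : SimpleGraph V)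
    (hT : T.IsTree) (hTG : T ≤ G) :
    G.egirth ≤ (liftGraph G T).egirth := by
  rw [le_egirth]
  intro a w hw
  obtain ⟨v, c, hc, hlen⟩ := lift_cycle G T a w hw
  have h1 : G.egirth ≤ (c.length : ℕ∞) := by
    rw [egirth]
    exact iInf_le_of_le v (iInf_le_of_le c (iInf_le _ hc))
  exact h1.trans (by exact_mod_cast hlen)

end
end

section
/- Let G be a finite connected simple graph, T a spanning tree of G, G̃ the lift of G with respect to T, and e ∈ E(T). Let A and B be the two components of T − e. Define P₁ as the set of vertices (v,f) of G̃ such that either v ∈ A and Σ_{s ∈ S joining A and B} f(s) = 0 in ZMod 2, or v ∈ B and Σ_{s ∈ S joining A and B} f(s) = 1; and define P₂ = V(G̃) \ P₁. Then the set of edges of G̃ joining P₁ to P₂ is exactly the set of edges ẽ of G̃ with π(ẽ) = e. -/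
open SimpleGraph

noncomputable section
attribute [local instance] Classical.propDecidable

variable {V : Type*}

/-- Indicator (in `ZMod 2`) that an edge `s` joins the vertex set `B` to its complement:
it equals `1` iff exactly one endpoint of `s` lies in `B`. -/
def crossIndicator (B : Set V) : Sym2 V → ZMod 2 :=
  Sym2.lift ⟨fun p q => (if p ∈ B then 1 else 0) + (if q ∈ B then 1 else 0),
    fun p q => add_comm _ _⟩

/-- For a tree edge `e`, the side `B` of `T - e`: the component of `T - e` containing the
second endpoint of `e`. -/
def treeSide (T : SimpleGraph V) (e : Sym2 V) : Set V :=
  {v | (T.deleteEdges {e}).Reachable (Quot.out e).2 v}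

/-- The function `h_e` on the vertices of the lift: for `e ∈ S`, `h_e (v, f) = f e`;
for a tree edge `e`, `h_e (v, f)` is the indicator that `v` lies in the component `B`
of `T - e` plus the sum of the values `f s` over the edges `s ∈ S` joining the two
components of `T - e`. -/
def hcut (G T : SimpleGraph V) (e : Sym2 V) :
    V × (nonTreeEdges G T → ZMod 2) → ZMod 2 := fun p =>
  if he : e ∈ nonTreeEdges G T then p.2 ⟨e, he⟩
  else (if p.1 ∈ treeSide T e then 1 else 0) +
    ∑ᶠ s : nonTreeEdges G T, crossIndicator (treeSide T e) s * p.2 s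

/-- The cut-indicator map `F : V(G̃) → ℝ^{E(G)}`, `F(x)(e) = h_e(x) ∈ {0,1}`, with
`ℝ^{E(G)}` carrying the `ℓ₁`-norm. -/
def cutMap (G T : SimpleGraph V) :
    (V × (nonTreeEdges G T → ZMod 2)) → PiLp 1 (fun _ : G.edgeSet => ℝ) :=
  fun p => WithLp.toLp 1 (fun e => ((hcut G T e p).val : ℝ))

/-- Auxiliary: the parity function on vertices of the lift. -/
private def Hfun (G T : SimpleGraph V) (B : Set V) :
    V × (nonTreeEdges G T → ZMod 2) → ZMod 2 := fun p =>
  (if p.1 ∈ B then 1 else 0) + ∑ᶠ s : nonTreeEdges G T, crossIndicator B s * p.2 s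

/-- Let `G` be a finite connected simple graph, `T` a spanning tree of `G`, `G̃` the lift
of `G` with respect to `T`, and `e ∈ E(T)`. Let `A` and `B` be the two components of
`T − e`. Define `P₁` as the set of vertices `(v,f)` of `G̃` such that either `v ∈ A` and
`Σ_{s ∈ S joining A and B} f(s) = 0` in `ZMod 2`, or `v ∈ B` and
`Σ_{s ∈ S joining A and B} f(s) = 1`; and `P₂ = V(G̃) \ P₁`. Then the set of edges of `G̃`
joining `P₁` to `P₂` is exactly the set of edges `et` of `G̃` with `π(et) = e`. -/
theorem liftGraph_cut_treeEdge {V : Type*} [Fintype V] (G T : SimpleGraph V)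
    (hG : G.Connected) (hT : T.IsTree) (hTG : T ≤ G)
    (e : Sym2 V) (he : e ∈ T.edgeSet) (A B : Set V)
    (hAunionB : A ∪ B = Set.univ) (hAinterB : A ∩ B = ∅)
    (hcomp : ∀ u w : V, (T.deleteEdges {e}).Reachable u w ↔
      ((u ∈ A ∧ w ∈ A) ∨ (u ∈ B ∧ w ∈ B))) :
    {et : Sym2 (V × (nonTreeEdges G T → ZMod 2)) | et ∈ (liftGraph G T).edgeSet ∧
        ∃ x y : V × (nonTreeEdges G T → ZMod 2),
          x ∈ {p : V × (nonTreeEdges G T → ZMod 2) |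
              (p.1 ∈ A ∧ (∑ᶠ s : nonTreeEdges G T, crossIndicator B s * p.2 s) = 0) ∨
              (p.1 ∈ B ∧ (∑ᶠ s : nonTreeEdges G T, crossIndicator B s * p.2 s) = 1)} ∧
          y ∉ {p : V × (nonTreeEdges G T → ZMod 2) |
              (p.1 ∈ A ∧ (∑ᶠ s : nonTreeEdges G T, crossIndicator B s * p.2 s) = 0) ∨
              (p.1 ∈ B ∧ (∑ᶠ s : nonTreeEdges G T, crossIndicator B s * p.2 s) = 1)} ∧
          et = s(x, y)} =
      {et : Sym2 (V × (nonTreeEdges G T → ZMod 2)) | et ∈ (liftGraph G T).edgeSet ∧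
        edgeProj G T et = e} := by

  classical
  haveI : Fintype (nonTreeEdges G T) := Fintype.ofFinite _
  have hpartAB : ∀ v : V, v ∈ A ↔ v ∉ B := by
    intro v
    constructor
    · intro hA hB
      have hv : v ∈ A ∩ B := ⟨hA, hB⟩
      rw [hAinterB] at hv; exact hv
    · intro hB
      have hv : v ∈ A ∪ B := by rw [hAunionB]; trivial
      exact hv.resolve_right hB
  have hcross : ∀ u v : V, crossIndicator B s(u, v)
      = (if u ∈ B then 1 else 0) + (if v ∈ B then 1 else 0) := by
    intro u v; simp [crossIndicator]
  -- key: how Hfun changes along an edge of the lift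
  have key : ∀ p q, (liftGraph G T).Adj p q →
      Hfun G T B q = Hfun G T B p + (if s(p.1, q.1) = e then 1 else 0) := by
    rintro p q ⟨hadj, hg⟩
    have hσq : (∑ᶠ s : nonTreeEdges G T, crossIndicator B s * q.2 s)
        = (∑ᶠ s : nonTreeEdges G T, crossIndicator B s * p.2 s)
          + (if hS : s(p.1, q.1) ∈ nonTreeEdges G T
              then crossIndicator B s(p.1, q.1) else 0) := by
      rw [hg]
      simp only [finsum_eq_sum_of_fintype, mul_add]
      rw [Finset.sum_add_distrib]
      congr 1
      by_cases hS : s(p.1, q.1) ∈ nonTreeEdges G T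
      · rw [dif_pos hS]
        have hcond : ∀ s : nonTreeEdges G T,
            ((s : Sym2 V) = s(p.1, q.1)) = (s = ⟨s(p.1, q.1), hS⟩) := by
          intro s; simp [Subtype.ext_iff]
        simp only [mul_ite, mul_one, mul_zero, hcond]
        rw [Finset.sum_ite_eq' Finset.univ (⟨s(p.1, q.1), hS⟩ : nonTreeEdges G T)]
        simp
      · rw [dif_neg hS]
        apply Finset.sum_eq_zero
        intro s _
        have : ¬ ((s : Sym2 V) = s(p.1, q.1)) := fun h => hS (h ▸ s.2)
        simp [this]
    by_cases hS : s(p.1, q.1) ∈ nonTreeEdges G T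
    · have hne : s(p.1, q.1) ≠ e := fun h => hS.2 (h ▸ he)
      rw [if_neg hne, add_zero]
      simp only [Hfun]
      rw [hσq, dif_pos hS, hcross]
      generalize (if p.1 ∈ B then (1 : ZMod 2) else 0) = a
      generalize (if q.1 ∈ B then (1 : ZMod 2) else 0) = b
      generalize (∑ᶠ s : nonTreeEdges G T, crossIndicator B s * p.2 s) = c
      revert a b c; decide
    · have hTedge : s(p.1, q.1) ∈ T.edgeSet := by
        by_contra h; exact hS ⟨G.mem_edgeSet.2 hadj, h⟩
      have hσeq : (∑ᶠ s : nonTreeEdges G T, crossIndicator B s * q.2 s)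
          = (∑ᶠ s : nonTreeEdges G T, crossIndicator B s * p.2 s) := by
        rw [hσq, dif_neg hS, add_zero]
      simp only [Hfun]
      rw [hσeq]
      by_cases heq : s(p.1, q.1) = e
      · rw [if_pos heq]
        have hbridge : T.IsBridge (s(p.1, q.1)) :=
          (isAcyclic_iff_forall_edge_isBridge.1 hT.2) hTedge
        have hnr : ¬ (T.deleteEdges {e}).Reachable p.1 q.1 := by
          rw [← heq]
          exact isBridge_iff.1 hbridge
        rw [hcomp] at hnr
        push_neg at hnr
        by_cases hB : p.1 ∈ B
        · have hq : q.1 ∉ B := hnr.2 hB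
          rw [if_pos hB, if_neg hq]
          generalize (∑ᶠ s : nonTreeEdges G T, crossIndicator B s * p.2 s) = c
          revert c; decide
        · have hp : p.1 ∈ A := (hpartAB _).2 hB
          have hq : q.1 ∉ A := hnr.1 hp
          have hq' : q.1 ∈ B := by
            by_contra h; exact hq ((hpartAB _).2 h)
          rw [if_neg hB, if_pos hq']
          generalize (∑ᶠ s : nonTreeEdges G T, crossIndicator B s * p.2 s) = c
          revert c; decide
      · rw [if_neg heq, add_zero]
        have hadj' : (T.deleteEdges {e}).Adj p.1 q.1 := by
          rw [SimpleGraph.deleteEdges_adj]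
          exact ⟨T.mem_edgeSet.1 hTedge, by simp [heq]⟩
        have hr := (hcomp p.1 q.1).1 hadj'.reachable
        rcases hr with ⟨hp, hq⟩ | ⟨hp, hq⟩
        · rw [if_neg ((hpartAB _).1 hp), if_neg ((hpartAB _).1 hq)]
        · rw [if_pos hp, if_pos hq]
  -- membership in P₁ equals Hfun = 0
  have hmem : ∀ p : V × (nonTreeEdges G T → ZMod 2),
      ((p.1 ∈ A ∧ (∑ᶠ s : nonTreeEdges G T, crossIndicator B s * p.2 s) = 0) ∨
       (p.1 ∈ B ∧ (∑ᶠ s : nonTreeEdges G T, crossIndicator B s * p.2 s) = 1))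
      ↔ Hfun G T B p = 0 := by
    intro p
    by_cases hB : p.1 ∈ B
    · have hA : p.1 ∉ A := fun h => (hpartAB _).1 h hB
      simp only [Hfun, if_pos hB]
      constructor
      · rintro (⟨h, _⟩ | ⟨_, h⟩)
        · exact absurd h hA
        · rw [h]; decide
      · intro h
        right
        refine ⟨hB, ?_⟩
        have h2 : ∀ x : ZMod 2, 1 + x = 0 → x = 1 := by decide
        exact h2 _ h
    · have hA : p.1 ∈ A := (hpartAB _).2 hB
      simp only [Hfun, if_neg hB, zero_add]
      constructor
      · rintro (⟨_, h⟩ | ⟨h, _⟩)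
        · exact h
        · exact absurd h hB
      · intro h; exact Or.inl ⟨hA, h⟩
  have hone : ∀ x : ZMod 2, ¬ x = 0 ↔ x = 1 := by decide
  ext et
  induction et using Sym2.ind with
  | _ a b =>
    simp only [Set.mem_setOf_eq]
    constructor
    · rintro ⟨hedge, x, y, hx, hy, hxy⟩
      refine ⟨hedge, ?_⟩
      rw [hxy] at hedge ⊢
      have hadj : (liftGraph G T).Adj x y := (liftGraph G T).mem_edgeSet.1 hedge
      have hHx : Hfun G T B x = 0 := (hmem x).1 hx
      have hHy : Hfun G T B y = 1 := by
        rw [← hone]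
        intro h
        exact hy ((hmem y).2 h)
      have hk := key x y hadj
      have hproj : s(x.1, y.1) = e := by
        by_contra h
        rw [if_neg h, add_zero, hHx, hHy] at hk
        exact one_ne_zero hk
      simpa [edgeProj] using hproj
    · rintro ⟨hedge, hproj⟩
      refine ⟨hedge, ?_⟩
      have hadj : (liftGraph G T).Adj a b := (liftGraph G T).mem_edgeSet.1 hedge
      have hproj' : s(a.1, b.1) = e := by simpa [edgeProj] using hproj
      have hk := key a b hadj
      rw [if_pos hproj'] at hk
      by_cases hHa : Hfun G T B a = 0
      · refine ⟨a, b, (hmem a).2 hHa, ?_, rfl⟩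
        intro hb
        have := (hmem b).1 hb
        rw [this, hHa] at hk
        exact one_ne_zero hk.symm
      · refine ⟨b, a, ?_, ?_, Sym2.eq_swap.symm⟩
        · apply (hmem b).2
          rw [hk, (hone _).1 hHa]
          decide
        · intro ha
          exact hHa ((hmem a).1 ha)


end
end

section
/- Let G be a finite connected simple graph, T a spanning tree of G, and G̃ the lift of G with respect to T. Let x, y ∈ V(G̃) and let P be a shortest path from x to y in G̃. Then every edge of G has multiplicity at most 2 in the projected walk π(P). -/
open SimpleGraph

noncomputable section
attribute [local instance] Classical.propDecidable

variable {V : Type*}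

/-- Pigeonhole: the multiplicity of an edge in a list of darts (projected to edges) is at
most the sum of the counts of its two darts. -/
private lemma count_edge_le_darts {G : SimpleGraph V} {a b : V} (hab : G.Adj a b)
    (l : List G.Dart) :
    (l.map SimpleGraph.Dart.edge).count s(a, b) ≤
      l.count (⟨(a, b), hab⟩ : G.Dart) + l.count (⟨(b, a), hab.symm⟩ : G.Dart) := by
  induction l with
  | nil => simp
  | cons d l ih =>
    simp only [List.map_cons, List.count_cons, beq_iff_eq]
    by_cases hd : d.edge = s(a, b)
    · have hdd : d = (⟨(a, b), hab⟩ : G.Dart) ∨ d = (⟨(b, a), hab.symm⟩ : G.Dart) := by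
        have h' : d.toProd = (a, b) ∨ d.toProd = (b, a) := by
          have : s(d.toProd.1, d.toProd.2) = s((a, b).1, (a, b).2) := hd
          rcases Sym2.mk_eq_mk_iff.mp this with h | h
          · exact Or.inl h
          · exact Or.inr h
        rcases h' with h | h
        · exact Or.inl (SimpleGraph.Dart.ext _ _ h)
        · exact Or.inr (SimpleGraph.Dart.ext _ _ h)
      rcases hdd with rfl | rfl <;> simp [hd] <;> omega
    · have h1 : d ≠ (⟨(a, b), hab⟩ : G.Dart) := by rintro rfl; exact hd rfl
      have h2 : d ≠ (⟨(b, a), hab.symm⟩ : G.Dart) := by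
        rintro rfl; exact hd Sym2.eq_swap
      simp [hd, h1, h2]
      omega

/-- Split a walk at an occurrence of a dart. -/
private lemma walk_split {G : SimpleGraph V} {a c : V} (h : G.Adj a c) :
    ∀ {u v : V} (p : G.Walk u v), (⟨(a, c), h⟩ : G.Dart) ∈ p.darts →
      ∃ (B : G.Walk u a) (C : G.Walk c v),
        p.length = B.length + 1 + C.length ∧
        p.edges = B.edges ++ s(a, c) :: C.edges := by
  intro u v p
  induction p with
  | nil => simp
  | @cons u w v hadj q ih =>
    intro hmem
    rw [SimpleGraph.Walk.darts_cons, List.mem_cons] at hmem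
    rcases hmem with h1 | h2
    · have hp : (u, w) = (a, c) := (congrArg SimpleGraph.Dart.toProd h1).symm
      obtain ⟨rfl, rfl⟩ := Prod.mk.injEq .. |>.mp hp
      exact ⟨SimpleGraph.Walk.nil, q, by simp [SimpleGraph.Walk.length_cons]; omega, by simp⟩
    · obtain ⟨B, C, hl, he⟩ := ih h2
      refine ⟨SimpleGraph.Walk.cons hadj B, C, ?_, ?_⟩
      · simp [SimpleGraph.Walk.length_cons, hl]; omega
      · simp [he]

/-- If a dart occurs at least twice in a walk, there is a walk two shorter with the same
endpoints whose edge multiplicities agree except for two fewer copies of the dart's edge. -/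
private lemma shortcut {G : SimpleGraph V} (d : G.Dart) :
    ∀ {a b : V} (W : G.Walk a b), 2 ≤ W.darts.count d →
      ∃ W' : G.Walk a b, W'.length + 2 = W.length ∧
        ∀ f, W.edges.count f = W'.edges.count f + (if f = d.edge then 2 else 0) := by
  intro a b W
  induction W with
  | nil => simp
  | @cons a w b hadj q ih =>
    intro hcount
    rw [SimpleGraph.Walk.darts_cons, List.count_cons] at hcount
    by_cases hd : (⟨(a, w), hadj⟩ : G.Dart) = d
    · subst hd
      have hmem : (⟨(a, w), hadj⟩ : G.Dart) ∈ q.darts := by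
        have h1 : 1 ≤ q.darts.count (⟨(a, w), hadj⟩ : G.Dart) := by
          simp only [beq_self_eq_true, if_true] at hcount
          omega
        exact List.count_pos_iff.mp (by omega)
      obtain ⟨B, C, hl, he⟩ := walk_split hadj q hmem
      refine ⟨B.reverse.append C, ?_, ?_⟩
      · rw [SimpleGraph.Walk.length_append, SimpleGraph.Walk.length_reverse,
          SimpleGraph.Walk.length_cons, hl]
        omega
      · intro f
        simp [SimpleGraph.Walk.edges_append, SimpleGraph.Walk.edges_reverse,
          SimpleGraph.Walk.edges_cons, he, List.count_append, List.count_cons,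
          List.count_reverse, SimpleGraph.Dart.edge]
        by_cases hf : s(a, w) = f
        · simp [hf]; ring
        · simp [hf, Ne.symm hf]
    · have hcount' : 2 ≤ q.darts.count d := by
        simp [hd] at hcount; omega
      obtain ⟨W', hl, hc⟩ := ih hcount'
      refine ⟨SimpleGraph.Walk.cons hadj W', by simp [SimpleGraph.Walk.length_cons]; omega, ?_⟩
      intro f
      simp [SimpleGraph.Walk.edges_cons, List.count_cons, hc f]
      by_cases hf : s(a, w) = f <;> simp [hf] <;> omega

/-- Any walk in `G` lifts to a walk in the lift graph, of the same length, starting at any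
point of the fiber; the endpoint fiber coordinate shifts by the mod-2 edge multiplicities. -/
private lemma lift_walk (G T : SimpleGraph V) :
    ∀ {u b : V} (W : G.Walk u b) (f : nonTreeEdges G T → ZMod 2),
      ∃ P : (liftGraph G T).Walk (u, f)
          (b, fun s => f s + ((W.edges.count (s : Sym2 V) : ℕ) : ZMod 2)),
        P.length = W.length := by
  intro u b W
  induction W with
  | nil =>
    intro f
    refine ⟨SimpleGraph.Walk.nil.copy rfl ?_, by rw [SimpleGraph.Walk.length_copy]; rfl⟩
    congr 1
    funext s
    simp
  | @cons u w b hadj q ih =>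
    intro f
    set g : nonTreeEdges G T → ZMod 2 :=
      fun s => f s + (if (s : Sym2 V) = s(u, w) then 1 else 0) with hg
    have hstep : (liftGraph G T).Adj (u, f) (w, g) := ⟨hadj, rfl⟩
    obtain ⟨Q, hQ⟩ := ih g
    have key : (fun s : nonTreeEdges G T =>
        g s + ((q.edges.count (s : Sym2 V) : ℕ) : ZMod 2)) =
        fun s => f s + ((((SimpleGraph.Walk.cons hadj q).edges.count (s : Sym2 V)) : ℕ) : ZMod 2) := by
      funext s
      simp only [hg, SimpleGraph.Walk.edges_cons, List.count_cons, beq_iff_eq]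
      by_cases hf : (s : Sym2 V) = s(u, w)
      · simp [hf]; push_cast; ring
      · simp [hf, Ne.symm hf]
    refine ⟨(SimpleGraph.Walk.cons hstep Q).copy rfl ?_, ?_⟩
    · exact congrArg _ key
    · rw [SimpleGraph.Walk.length_copy, SimpleGraph.Walk.length_cons, hQ]; rfl

/-- Projection of a walk in the lift: the endpoint fiber coordinate is determined by the
mod-2 multiplicities of the projected edges. -/
private lemma proj_fiber (G T : SimpleGraph V) :
    ∀ {x y : V × (nonTreeEdges G T → ZMod 2)} (P : (liftGraph G T).Walk x y),
      y.2 = fun s => x.2 s + (((P.edges.map (edgeProj G T)).count (s : Sym2 V) : ℕ) : ZMod 2) := by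
  intro x y P
  induction P with
  | nil => funext s; simp
  | @cons x p y hadj Q ih =>
    funext s
    obtain ⟨h1, h2⟩ := id hadj
    have hy := congrFun ih s
    have hp := congrFun h2 s
    rw [hy, hp]
    have hmap : edgeProj G T s(x, p) = s(x.1, p.1) := rfl
    simp only [SimpleGraph.Walk.edges_cons, List.map_cons, hmap, List.count_cons, beq_iff_eq]
    by_cases hf : (s : Sym2 V) = s(x.1, p.1)
    · simp [hf]; push_cast; ring
    · simp [hf, Ne.symm hf]

/-- Let `G` be a finite connected simple graph, `T` a spanning tree of `G`, and `G̃` the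
lift of `G` with respect to `T`. Let `x, y ∈ V(G̃)` and let `P` be a shortest path from `x`
to `y` in `G̃`. Then every edge of `G` has multiplicity at most `2` in the projected walk
`π(P)`. -/
theorem multiplicity_le_two {V : Type*} [Fintype V] (G T : SimpleGraph V)
    (hG : G.Connected) (hT : T.IsTree) (hTG : T ≤ G)
    (x y : V × (nonTreeEdges G T → ZMod 2)) (P : (liftGraph G T).Walk x y)
    (hpath : P.IsPath) (hshort : P.length = (liftGraph G T).dist x y)
    (e : Sym2 V) :
    (P.edges.map (edgeProj G T)).count e ≤ 2 := by
  by_contra hc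
  push_neg at hc
  have hc3 : 3 ≤ (P.edges.map (edgeProj G T)).count e := hc
  -- the projected walk
  set W : G.Walk x.1 y.1 := P.map (liftProj G T) with hW
  have hWe : W.edges = P.edges.map (edgeProj G T) := by
    rw [hW]; exact SimpleGraph.Walk.edges_map _ _
  have hWl : W.length = P.length := SimpleGraph.Walk.length_map _ _
  -- e is an actual edge of G, say s(a, b)
  have hmem : e ∈ W.edges := by
    rw [hWe]
    exact List.count_pos_iff.mp (by omega)
  have hadjE : e ∈ G.edgeSet := SimpleGraph.Walk.edges_subset_edgeSet W hmem
  obtain ⟨a, b, rfl⟩ : ∃ a b, e = s(a, b) := by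
    induction e using Sym2.ind with
    | _ a b => exact ⟨a, b, rfl⟩
  have hab : G.Adj a b := hadjE
  -- pigeonhole: some dart with edge s(a,b) occurs at least twice
  have hdartsEq : W.edges = W.darts.map SimpleGraph.Dart.edge := rfl
  have hple := count_edge_le_darts hab W.darts
  rw [← hdartsEq, hWe] at hple
  have : 2 ≤ W.darts.count (⟨(a, b), hab⟩ : G.Dart) ∨
      2 ≤ W.darts.count (⟨(b, a), hab.symm⟩ : G.Dart) := by omega
  obtain ⟨d, hd2, hde⟩ : ∃ d : G.Dart, 2 ≤ W.darts.count d ∧ d.edge = s(a, b) := by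
    rcases this with h | h
    · exact ⟨_, h, rfl⟩
    · exact ⟨_, h, Sym2.eq_swap⟩
  -- surgery: shorter walk with same edge parities
  obtain ⟨W', hlen, hcnt⟩ := shortcut d W hd2
  -- the endpoint fiber coordinates agree
  have hfiber : y.2 = fun s : nonTreeEdges G T =>
      x.2 s + ((W'.edges.count (s : Sym2 V) : ℕ) : ZMod 2) := by
    have h0 := proj_fiber G T P
    rw [h0]
    funext s
    rw [← hWe]
    have h1 := hcnt (s : Sym2 V)
    by_cases hf : (s : Sym2 V) = d.edge
    · rw [h1, hf]
      simp only [if_pos rfl]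
      push_cast
      have h2 : ((2 : ℕ) : ZMod 2) = 0 := by decide
      push_cast at h2 ⊢
      ring_nf
      rw [show ((2:ZMod 2)) = 0 by decide]
      ring
    · rw [h1, if_neg hf]
      simp
  -- lift W' to a walk from x to y
  obtain ⟨Q, hQ⟩ := lift_walk G T W' x.2
  have hx : ((x.1, x.2) : V × (nonTreeEdges G T → ZMod 2)) = x := rfl
  have hy : ((y.1, fun s : nonTreeEdges G T =>
      x.2 s + ((W'.edges.count (s : Sym2 V) : ℕ) : ZMod 2)) :
      V × (nonTreeEdges G T → ZMod 2)) = y := by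
    rw [← hfiber]
  have hdist := SimpleGraph.dist_le (Q.copy hx hy)
  rw [SimpleGraph.Walk.length_copy, hQ] at hdist
  omega

end
end
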